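/- If the true steady-state probability of the high-hazard state is x̄ and the current belief x satisfies x > x̄, and q_H > q_L, then the true probability of observing y = 1 is strictly less than the believed probability: x̄·q_H + (1−x̄)·q_L < x·q_H + (1−x)·q_L. Consequently, the expected updated belief under the true state, namely (x̄·q_H + (1−x̄)·q_L)·x'(1) + (1 − x̄·q_H − (1−x̄)·q_L)·x'(0), is strictly less than x. Symmetrically, if x < x̄, the expected updated belief under the true state is strictly greater than x. -/
import Mathlib

theorem stmt_4 (x xbar qH qL : ℝ) (hx : x ∈ Set.Ioo (0:ℝ) 1)
    (hxbar : xbar ∈ Set.Ioo (0:ℝ) 1) (hqL : 0 < qL) (hq : qL < qH) (hqH : qH < 1) :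
    (x > xbar →
      xbar * qH + (1 - xbar) * qL < x * qH + (1 - x) * qL ∧
      (xbar * qH + (1 - xbar) * qL) * (x * qH / (x * qH + (1 - x) * qL)) +
        (1 - (xbar * qH + (1 - xbar) * qL)) *
          (x * (1 - qH) / (x * (1 - qH) + (1 - x) * (1 - qL))) < x) ∧
    (x < xbar →
      x < (xbar * qH + (1 - xbar) * qL) * (x * qH / (x * qH + (1 - x) * qL)) +
        (1 - (xbar * qH + (1 - xbar) * qL)) *
          (x * (1 - qH) / (x * (1 - qH) + (1 - x) * (1 - qL)))) := by
  obtain ⟨hx0, hx1⟩ := hx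
  obtain ⟨hb0, hb1⟩ := hxbar
  have hp : (0:ℝ) < x * qH + (1 - x) * qL := by nlinarith
  have hp' : (0:ℝ) < x * (1 - qH) + (1 - x) * (1 - qL) := by nlinarith
  constructor
  · intro h
    constructor
    · nlinarith
    · rw [← mul_div_assoc, ← mul_div_assoc, div_add_div _ _ hp.ne' hp'.ne', div_lt_iff₀ (by positivity)]
      nlinarith [mul_pos hp hp', mul_pos (mul_pos hx0 (sub_pos.2 hx1)) (sub_pos.2 hq), mul_pos (sub_pos.2 h) (sub_pos.2 hq)]
  · intro h
    rw [← mul_div_assoc, ← mul_div_assoc, div_add_div _ _ hp.ne' hp'.ne', lt_div_iff₀ (by positivity)]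
    nlinarith [mul_pos hp hp', mul_pos (mul_pos hx0 (sub_pos.2 hx1)) (sub_pos.2 hq), mul_pos (sub_pos.2 h) (sub_pos.2 hq)]
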